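/- arXiv:1707.08365 — 4 statements merged into one kernel-verified Lean document; each statement's English description precedes it below -/
import Mathlib

section
/- Higman's theorem: if (Q, ≼) is wqo, then the set of finite sequences Q^{<ω}, quasi-ordered by s ≼* t iff there is a strictly increasing f : {0,...,len s − 1} → {0,...,len t − 1} with s(i) ≼ t(f(i)) for all i, is wqo. -/
def IsWqo {Q : Type*} (r : Q → Q → Prop) : Prop :=
  ∀ f : ℕ → Q, ∃ m n : ℕ, m < n ∧ r (f m) (f n)

def ListEmb {Q : Type*} (r : Q → Q → Prop) (s t : List Q) : Prop :=
  ∃ f : Fin s.length → Fin t.length, StrictMono f ∧ ∀ i, r (s.get i) (t.get (f i))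

lemma sublistForall₂_listEmb {Q : Type*} {r : Q → Q → Prop} {s t : List Q}
    (h : List.SublistForall₂ r s t) : ListEmb r s t := by
  induction h with
  | nil => exact ⟨Fin.elim0, fun i => i.elim0, fun i => i.elim0⟩
  | @cons a₁ a₂ l₁ l₂ hr _ ih =>
    obtain ⟨f, hmono, hrel⟩ := ih
    simp only [ListEmb, List.length_cons]
    refine ⟨Fin.cases 0 (fun i => (f i).succ), ?_, ?_⟩
    · intro i j hij
      induction i using Fin.cases with
      | zero =>
        induction j using Fin.cases with
        | zero => exact absurd hij (lt_irrefl _)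
        | succ j => simp [(f j).succ_pos]
      | succ i =>
        induction j using Fin.cases with
        | zero => exact absurd hij (by simp [Fin.lt_iff_val_lt_val])
        | succ j =>
          simp only [Fin.cases_succ]
          rw [Fin.succ_lt_succ_iff] at hij ⊢
          exact hmono hij
    · intro i
      induction i using Fin.cases with
      | zero => simpa using hr
      | succ i => simpa using hrel i
  | @cons_right a l₁ l₂ _ ih =>
    obtain ⟨f, hmono, hrel⟩ := ih
    refine ⟨fun i => (f i).succ, fun i j hij => ?_, fun i => by simpa using hrel i⟩
    rw [Fin.succ_lt_succ_iff]
    exact hmono hij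

theorem stmt13 {Q : Type*} (r : Q → Q → Prop)
    (hrefl : ∀ x, r x x) (htrans : ∀ x y z, r x y → r y z → r x z)
    (hwqo : IsWqo r) :
    IsWqo (ListEmb r) := by
  have : IsRefl Q r := ⟨hrefl⟩
  have : IsTrans Q r := ⟨htrans⟩
  have : IsPreorder Q r := {}
  have hp : (Set.univ : Set Q).PartiallyWellOrderedOn r :=
    Set.partiallyWellOrderedOn_iff_exists_lt.mpr fun f _ => hwqo f
  have h := hp.partiallyWellOrderedOn_sublistForall₂ r
  intro f
  obtain ⟨m, n, hmn, h2⟩ := h.exists_lt (f := f) (fun n x _ => Set.mem_univ x)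
  exact ⟨m, n, hmn, sublistForall₂_listEmb h2⟩
end

section
/- If (Q, ≼) is wqo, then the set of finite subsets of Q, quasi-ordered by the Hoare order X ≼^♭ Y iff for every x ∈ X there is y ∈ Y with x ≼ y, is wqo. -/
lemma forall₂_mem_aux {Q : Type*} {r : Q → Q → Prop} :
    ∀ {l₁ l₂ : List Q}, List.Forall₂ r l₁ l₂ → ∀ x ∈ l₁, ∃ y ∈ l₂, r x y := by
  intro l₁ l₂ h
  induction h with
  | nil => simp
  | cons hab _ ih =>
    intro x hx
    rcases List.mem_cons.1 hx with h | h
    · exact ⟨_, List.mem_cons_self, h ▸ hab⟩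
    · obtain ⟨y, hy, hxy⟩ := ih x h
      exact ⟨y, List.mem_cons_of_mem _ hy, hxy⟩

theorem stmt14 {Q : Type*} (r : Q → Q → Prop)
    (hrefl : ∀ x, r x x) (htrans : ∀ x y z, r x y → r y z → r x z)
    (hwqo : IsWqo r) :
    IsWqo (fun X Y : Finset Q => ∀ x ∈ X, ∃ y ∈ Y, r x y) := by
  haveI : IsRefl Q r := ⟨hrefl⟩
  haveI : IsTrans Q r := ⟨htrans⟩
  have hpwo : (Set.univ : Set Q).PartiallyWellOrderedOn r :=
    Set.partiallyWellOrderedOn_iff_exists_lt.2 (fun f _ => hwqo f)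
  haveI : IsPreorder Q r := { refl := hrefl, trans := htrans }
  have h := hpwo.partiallyWellOrderedOn_sublistForall₂ r
  intro f
  obtain ⟨m, n, hmn, hrel⟩ := h.exists_lt (f := fun k => (f k).toList) (fun k x _ => Set.mem_univ x)
  refine ⟨m, n, hmn, fun x hx => ?_⟩
  rw [List.sublistForall₂_iff] at hrel
  obtain ⟨l, hforall, hsub⟩ := hrel
  obtain ⟨y, hy, hxy⟩ := forall₂_mem_aux hforall x (Finset.mem_toList.2 hx)
  exact ⟨y, Finset.mem_toList.1 (hsub.mem hy), hxy⟩
end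

section
/- Kruskal's theorem for labelled trees: if (Q, ≼) is wqo, then the set of finite rooted trees labelled by elements of Q, quasi-ordered by homeomorphic embeddability preserving labels (an injective map f between trees with f(s ∧ t) = f(s) ∧ f(t), where ∧ is the infimum/longest common initial segment, and label(s) ≼ label(f(s)) for all s), is wqo. -/
/-- Longest common prefix (the infimum of two nodes of a tree of finite
sequences of naturals). -/
def lcp : List ℕ → List ℕ → List ℕ
  | a :: as, b :: bs => if a = b then a :: lcp as bs else []
  | _, _ => []

theorem lcp_prefix_left : ∀ a b : List ℕ, lcp a b <+: a := by
  intro a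
  induction a with
  | nil => intro b; cases b <;> simp [lcp]
  | cons x as ih =>
    intro b
    cases b with
    | nil => simp [lcp]
    | cons y bs =>
      by_cases h : x = y
      · obtain ⟨t, ht⟩ := ih bs
        exact ⟨t, by simp [lcp, h, ht]⟩
      · exact ⟨x :: as, by simp [lcp, h]⟩

/-- A finite rooted tree with nodes labelled by elements of `Q`:
a finite set of finite sequences of naturals closed under initial segments,
together with a labelling function on the nodes. -/
structure LTree (Q : Type*) where
  nodes : Finset (List ℕ)
  closed : ∀ s ∈ nodes, ∀ t : List ℕ, t <+: s → t ∈ nodes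
  label : {s : List ℕ // s ∈ nodes} → Q

/-- The infimum (longest common initial segment) of two nodes of a tree. -/
def LTree.meet {Q : Type*} (T : LTree Q) (s t : {x : List ℕ // x ∈ T.nodes}) :
    {x : List ℕ // x ∈ T.nodes} :=
  ⟨lcp s.1 t.1, T.closed s.1 s.2 _ (lcp_prefix_left s.1 t.1)⟩

/-- Homeomorphic embeddability of labelled trees: an injective map of nodes
preserving infima, with labels increasing along the map. -/
def TreeEmb {Q : Type*} (r : Q → Q → Prop) (T₀ T₁ : LTree Q) : Prop :=
  ∃ f : {x : List ℕ // x ∈ T₀.nodes} → {x : List ℕ // x ∈ T₁.nodes},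
    Function.Injective f ∧
    (∀ s t, f (T₀.meet s t) = T₁.meet (f s) (f t)) ∧
    ∀ s, r (T₀.label s) (T₁.label (f s))

/-! ### Basic facts about `lcp` -/

theorem lcp_nil_left (b : List ℕ) : lcp [] b = [] := by cases b <;> rfl

theorem lcp_nil_right (a : List ℕ) : lcp a [] = [] := by cases a <;> rfl

theorem lcp_cons (a b : ℕ) (s t : List ℕ) :
    lcp (a :: s) (b :: t) = if a = b then a :: lcp s t else [] := rfl

/-! ### Basic tree constructions -/

namespace Kruskal

variable {Q : Type*}

/-- The empty tree. -/
def emptyTree (Q : Type*) : LTree Q :=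
  ⟨∅, by simp, fun s => absurd s.2 (Finset.notMem_empty _)⟩

theorem treeEmb_of_empty (r : Q → Q → Prop) {T₀ : LTree Q} (h : T₀.nodes = ∅)
    (T₁ : LTree Q) : TreeEmb r T₀ T₁ := by
  have hh : ∀ x : {x : List ℕ // x ∈ T₀.nodes}, False := fun x => by
    have := x.2; simp only [h] at this; exact Finset.notMem_empty _ this
  exact ⟨fun s => absurd (hh s) not_false,
    fun a b _ => absurd (hh a) not_false,
    fun s t => absurd (hh s) not_false,
    fun s => absurd (hh s) not_false⟩

theorem treeEmb_refl (r : Q → Q → Prop) (hrefl : ∀ x, r x x) (T : LTree Q) :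
    TreeEmb r T T :=
  ⟨id, fun _ _ h => h, fun _ _ => rfl, fun _ => hrefl _⟩

theorem treeEmb_trans (r : Q → Q → Prop) (htrans : ∀ x y z, r x y → r y z → r x z)
    {T₀ T₁ T₂ : LTree Q} (h₀ : TreeEmb r T₀ T₁) (h₁ : TreeEmb r T₁ T₂) :
    TreeEmb r T₀ T₂ := by
  obtain ⟨f, hfinj, hfmeet, hflab⟩ := h₀
  obtain ⟨g, hginj, hgmeet, hglab⟩ := h₁
  refine ⟨g ∘ f, hginj.comp hfinj, fun s t => ?_, fun s => htrans _ _ _ (hflab s) (hglab (f s))⟩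
  simp only [Function.comp_apply, hfmeet, hgmeet]

/-- The nodes of the subtree rooted at the child `c` of the root. -/
def subNodes (T : LTree Q) (c : ℕ) : Finset (List ℕ) :=
  (T.nodes.filter (fun s => s.head? = some c)).image List.tail

theorem mem_subNodes (T : LTree Q) (c : ℕ) (t : List ℕ) :
    t ∈ subNodes T c ↔ c :: t ∈ T.nodes := by
  constructor
  · rintro ht
    simp only [subNodes, Finset.mem_image, Finset.mem_filter] at ht
    obtain ⟨u, ⟨hu, hh⟩, rfl⟩ := ht
    cases u with
    | nil => simp at hh
    | cons a u => simp only [List.head?] at hh; cases hh; simpa using hu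
  · intro ht
    simp only [subNodes, Finset.mem_image, Finset.mem_filter]
    exact ⟨c :: t, ⟨ht, rfl⟩, rfl⟩

/-- The subtree rooted at the child `c` of the root. -/
def LTree.subtreeAt (T : LTree Q) (c : ℕ) : LTree Q where
  nodes := subNodes T c
  closed := by
    intro s hs t ht
    rw [mem_subNodes] at hs ⊢
    refine T.closed _ hs _ ?_
    obtain ⟨w, hw⟩ := ht
    exact ⟨w, by simp [hw]⟩
  label := fun s => T.label ⟨c :: s.1, (mem_subNodes T c s.1).mp s.2⟩

theorem mem_subtreeAt (T : LTree Q) (c : ℕ) (t : List ℕ) :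
    t ∈ (LTree.subtreeAt T c).nodes ↔ c :: t ∈ T.nodes := mem_subNodes T c t

theorem subtreeAt_card_lt (T : LTree Q) (c : ℕ) (hc : [c] ∈ T.nodes) :
    (LTree.subtreeAt T c).nodes.card < T.nodes.card := by
  have hnil : ([] : List ℕ) ∈ T.nodes := T.closed _ hc [] ⟨[c], rfl⟩
  calc (LTree.subtreeAt T c).nodes.card
      ≤ (T.nodes.filter (fun s => s.head? = some c)).card := Finset.card_image_le
    _ ≤ (T.nodes.erase []).card := by
        apply Finset.card_le_card
        intro s hs
        simp only [Finset.mem_filter] at hs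
        refine Finset.mem_erase.mpr ⟨?_, hs.1⟩
        rintro rfl; simp at hs
    _ < T.nodes.card := Finset.card_erase_lt_of_mem hnil

theorem treeEmb_subtreeAt (r : Q → Q → Prop) (hrefl : ∀ x, r x x) (T : LTree Q) (c : ℕ) :
    TreeEmb r (LTree.subtreeAt T c) T := by
  refine ⟨fun s => ⟨c :: s.1, (mem_subNodes T c s.1).mp s.2⟩, ?_, ?_, ?_⟩
  · intro a b hab
    have : c :: a.1 = c :: b.1 := congrArg Subtype.val hab
    exact Subtype.ext (by injection this)
  · intro s t
    apply Subtype.ext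
    show c :: lcp s.1 t.1 = lcp (c :: s.1) (c :: t.1)
    simp [lcp_cons]
  · intro s
    exact hrefl _

/-- Child indices at the root. -/
def childIdx (T : LTree Q) : Finset ℕ :=
  (T.nodes.filter (fun s => s.length = 1)).image List.headI

theorem mem_childIdx (T : LTree Q) (c : ℕ) : c ∈ childIdx T ↔ [c] ∈ T.nodes := by
  constructor
  · intro hc
    simp only [childIdx, Finset.mem_image, Finset.mem_filter] at hc
    obtain ⟨s, ⟨hs, hl⟩, rfl⟩ := hc
    match s, hl with
    | [a], _ => simpa using hs
  · intro hc
    simp only [childIdx, Finset.mem_image, Finset.mem_filter]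
    exact ⟨[c], ⟨hc, rfl⟩, rfl⟩

/-- The list of subtrees at the root's children. -/
noncomputable def childList (T : LTree Q) : List (LTree Q) :=
  (childIdx T).toList.map (LTree.subtreeAt T)

end Kruskal
namespace Kruskal

variable {Q : Type*}

/-- Combine embeddings of root subtrees into a map on all nodes. -/
def glueMap (T₀ T₁ : LTree Q) (h₁ : ([] : List ℕ) ∈ T₁.nodes) (σ : ℕ → ℕ)
    (F : ∀ c, ({x : List ℕ // x ∈ (LTree.subtreeAt T₀ c).nodes} →
      {x : List ℕ // x ∈ (LTree.subtreeAt T₁ (σ c)).nodes})) :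
    {s : List ℕ // s ∈ T₀.nodes} → {x : List ℕ // x ∈ T₁.nodes}
  | ⟨[], _⟩ => ⟨[], h₁⟩
  | ⟨c :: u, h⟩ =>
      ⟨σ c :: (F c ⟨u, (mem_subNodes T₀ c u).mpr h⟩).1,
       (mem_subNodes T₁ (σ c) _).mp (F c ⟨u, (mem_subNodes T₀ c u).mpr h⟩).2⟩

theorem glue (r : Q → Q → Prop) (T₀ T₁ : LTree Q)
    (h₀ : ([] : List ℕ) ∈ T₀.nodes) (h₁ : ([] : List ℕ) ∈ T₁.nodes)
    (hroot : r (T₀.label ⟨[], h₀⟩) (T₁.label ⟨[], h₁⟩))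
    (σ : ℕ → ℕ)
    (hσinj : ∀ c c', [c] ∈ T₀.nodes → [c'] ∈ T₀.nodes → σ c = σ c' → c = c')
    (hsub : ∀ c, [c] ∈ T₀.nodes → TreeEmb r (LTree.subtreeAt T₀ c) (LTree.subtreeAt T₁ (σ c))) :
    TreeEmb r T₀ T₁ := by
  classical
  -- choose the witness maps, with identity as default when the child is absent
  have hsub' : ∀ c, ∃ F : {x : List ℕ // x ∈ (LTree.subtreeAt T₀ c).nodes} →
      {x : List ℕ // x ∈ (LTree.subtreeAt T₁ (σ c)).nodes},
      [c] ∈ T₀.nodes →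
        (Function.Injective F ∧
        (∀ s t, F ((LTree.subtreeAt T₀ c).meet s t)
            = (LTree.subtreeAt T₁ (σ c)).meet (F s) (F t)) ∧
        ∀ s, r ((LTree.subtreeAt T₀ c).label s) ((LTree.subtreeAt T₁ (σ c)).label (F s))) := by
    intro c
    by_cases hc : [c] ∈ T₀.nodes
    · obtain ⟨F, hF⟩ := hsub c hc
      exact ⟨F, fun _ => hF⟩
    · refine ⟨fun s => absurd ?_ hc, fun h => absurd h hc⟩
      exact T₀.closed _ ((mem_subNodes T₀ c _).mp s.2) [c] ⟨s.1, rfl⟩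
  choose F hF using hsub'
  have hmem : ∀ {c : ℕ} {u : List ℕ}, c :: u ∈ T₀.nodes → [c] ∈ T₀.nodes :=
    fun {c u} h => T₀.closed _ h [c] ⟨u, rfl⟩
  refine ⟨glueMap T₀ T₁ h₁ σ F, ?_, ?_, ?_⟩
  · -- injectivity
    rintro ⟨as, ha⟩ ⟨bs, hb⟩ hab
    match as, ha, bs, hb, hab with
    | [], _, [], _, _ => rfl
    | [], _, c :: u, _, hab => simp [glueMap] at hab
    | c :: u, _, [], _, hab => simp [glueMap] at hab
    | c :: u, ha, c' :: v, hb, hab =>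
      simp only [glueMap, Subtype.mk.injEq, List.cons.injEq] at hab
      obtain ⟨hcc, huv⟩ := hab
      obtain rfl : c = c' := hσinj c c' (hmem ha) (hmem hb) hcc
      have := (hF c (hmem ha)).1 (Subtype.ext huv)
      have : u = v := congrArg Subtype.val this
      subst this; rfl
  · -- meets
    rintro ⟨s, hs⟩ ⟨t, ht⟩
    match s, hs, t, ht with
    | [], hs, t, ht =>
      have e1 : T₀.meet ⟨[], hs⟩ ⟨t, ht⟩ = ⟨[], hs⟩ := Subtype.ext (lcp_nil_left t)
      rw [e1]
      apply Subtype.ext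
      show ([] : List ℕ) = lcp [] (glueMap T₀ T₁ h₁ σ F ⟨t, ht⟩).1
      rw [lcp_nil_left]
    | c :: u, hs, [], ht =>
      have e1 : T₀.meet ⟨c :: u, hs⟩ ⟨[], ht⟩ = ⟨[], h₀⟩ := Subtype.ext (lcp_nil_right _)
      rw [e1]
      apply Subtype.ext
      show ([] : List ℕ) = lcp (glueMap T₀ T₁ h₁ σ F ⟨c :: u, hs⟩).1 []
      rw [lcp_nil_right]
    | c :: u, hs, c' :: v, ht =>
      by_cases hcc : c = c'
      · subst hcc
        have hm : c :: lcp u v ∈ T₀.nodes := by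
          refine T₀.closed _ hs _ ?_
          obtain ⟨w, hw⟩ := lcp_prefix_left u v
          exact ⟨w, by simp [hw]⟩
        have e1 : T₀.meet ⟨c :: u, hs⟩ ⟨c :: v, ht⟩ = ⟨c :: lcp u v, hm⟩ :=
          Subtype.ext (by simp [LTree.meet, lcp_cons])
        rw [e1]
        apply Subtype.ext
        have hmeet := (hF c (hmem hs)).2.1 ⟨u, (mem_subNodes T₀ c u).mpr hs⟩
          ⟨v, (mem_subNodes T₀ c v).mpr ht⟩
        have hval := congrArg Subtype.val hmeet
        show σ c :: (F c ⟨lcp u v, _⟩).1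
            = lcp (σ c :: (F c ⟨u, _⟩).1) (σ c :: (F c ⟨v, _⟩).1)
        rw [lcp_cons, if_pos rfl]
        congr 1
      · have e1 : T₀.meet ⟨c :: u, hs⟩ ⟨c' :: v, ht⟩ = ⟨[], h₀⟩ :=
          Subtype.ext (by simp [LTree.meet, lcp_cons, hcc])
        rw [e1]
        apply Subtype.ext
        have hσne : σ c ≠ σ c' := fun h => hcc (hσinj c c' (hmem hs) (hmem ht) h)
        show ([] : List ℕ) = lcp (σ c :: (F c ⟨u, _⟩).1) (σ c' :: (F c' ⟨v, _⟩).1)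
        rw [lcp_cons, if_neg hσne]
  · -- labels
    rintro ⟨s, hs⟩
    match s, hs with
    | [], hs => exact hroot
    | c :: u, hs => exact (hF c (hmem hs)).2.2 ⟨u, (mem_subNodes T₀ c u).mpr hs⟩

end Kruskal
namespace Kruskal

variable {Q : Type*}

theorem emb_of_sublistForall₂ (r : Q → Q → Prop) (T₀ T₁ : LTree Q)
    (h₀ : ([] : List ℕ) ∈ T₀.nodes) (h₁ : ([] : List ℕ) ∈ T₁.nodes)
    (hroot : r (T₀.label ⟨[], h₀⟩) (T₁.label ⟨[], h₁⟩))
    (hch : List.SublistForall₂ (TreeEmb r) (childList T₀) (childList T₁)) :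
    TreeEmb r T₀ T₁ := by
  classical
  rw [List.sublistForall₂_iff] at hch
  obtain ⟨l, hfa, hsl⟩ := hch
  rw [childList, List.sublist_map_iff] at hsl
  obtain ⟨d, hd, rfl⟩ := hsl
  rw [childList, List.forall₂_map_left_iff, List.forall₂_map_right_iff] at hfa
  set c₀ : List ℕ := (childIdx T₀).toList with hc₀
  set c₁ : List ℕ := (childIdx T₁).toList with hc₁
  have hlen : c₀.length = d.length := hfa.length_eq
  have hnod₀ : c₀.Nodup := Finset.nodup_toList _
  have hnodd : d.Nodup := hd.nodup (Finset.nodup_toList _)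
  -- the index map
  set σ : ℕ → ℕ := fun c => d.getD (c₀.idxOf c) 0 with hσ
  have hidx : ∀ c, [c] ∈ T₀.nodes → c₀.idxOf c < d.length := by
    intro c hc
    rw [← hlen]
    exact List.idxOf_lt_length_iff.mpr (by rw [hc₀, Finset.mem_toList, mem_childIdx]; exact hc)
  have hσval : ∀ c, (h : [c] ∈ T₀.nodes) → σ c = d[c₀.idxOf c]'(hidx c h) := by
    intro c hc
    exact List.getD_eq_getElem d 0 (hidx c hc)
  refine glue r T₀ T₁ h₀ h₁ hroot σ ?_ ?_
  · intro c c' hc hc' hcc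
    rw [hσval c hc, hσval c' hc'] at hcc
    have := (hnodd.getElem_inj_iff).mp hcc
    have hc0 : c ∈ c₀ := by rw [hc₀, Finset.mem_toList, mem_childIdx]; exact hc
    have hc0' : c' ∈ c₀ := by rw [hc₀, Finset.mem_toList, mem_childIdx]; exact hc'
    have e1 := List.getElem_idxOf (List.idxOf_lt_length_iff.mpr hc0)
    have e2 := List.getElem_idxOf (List.idxOf_lt_length_iff.mpr hc0')
    rw [← e1, ← e2]; simp only [this]
  · intro c hc
    have hi := hidx c hc
    have hi' : c₀.idxOf c < c₀.length := by rw [hlen]; exact hi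
    have := List.forall₂_iff_get.mp hfa
    have hrel := this.2 (c₀.idxOf c) hi' hi
    have e1 : c₀.get ⟨c₀.idxOf c, hi'⟩ = c := by
      have hc0 : c ∈ c₀ := by rw [hc₀, Finset.mem_toList, mem_childIdx]; exact hc
      simpa using List.getElem_idxOf (List.idxOf_lt_length_iff.mpr hc0)
    rw [e1] at hrel
    rw [hσval c hc]
    simpa using hrel

end Kruskal
namespace Kruskal

variable {Q : Type*} (r : Q → Q → Prop)

/-- A bad sequence: no earlier term embeds in a later one. -/
def Bad (f : ℕ → LTree Q) : Prop := ∀ m n, m < n → ¬ TreeEmb r (f m) (f n)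

/-- `x` extends the finite prefix `p` to a bad sequence. -/
def ExtBad (p : List (LTree Q)) (x : LTree Q) : Prop :=
  ∃ g : ℕ → LTree Q, Bad r g ∧ (∀ i (h : i < p.length), g i = p.get ⟨i, h⟩) ∧ g p.length = x

theorem exists_minCard (P : LTree Q → Prop) (h : ∃ x, P x) :
    ∃ x, P x ∧ ∀ y, P y → x.nodes.card ≤ y.nodes.card := by
  obtain ⟨x, hxP, hmin⟩ :=
    (InvImage.wf (fun T : LTree Q => T.nodes.card) Nat.lt_wfRel.wf).has_min {x | P x} h
  exact ⟨x, hxP, fun y hy => not_lt.mp (hmin y hy)⟩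

open Classical in
/-- The next element of the minimal bad sequence. -/
noncomputable def nextMin (p : List (LTree Q)) : LTree Q :=
  if h : ∃ x, ExtBad r p x then (exists_minCard _ h).choose else emptyTree Q

/-- Prefixes of the minimal bad sequence. -/
noncomputable def mbsList : ℕ → List (LTree Q)
  | 0 => []
  | n + 1 => mbsList n ++ [nextMin r (mbsList n)]

/-- The minimal bad sequence. -/
noncomputable def mbs (n : ℕ) : LTree Q := nextMin r (mbsList r n)

theorem mbsList_length (n : ℕ) : (mbsList r n).length = n := by
  induction n with
  | zero => rfl
  | succ n ih => simp [mbsList, ih]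

theorem mbsList_get (n i : ℕ) (h : i < (mbsList r n).length) :
    (mbsList r n).get ⟨i, h⟩ = mbs r i := by
  induction n with
  | zero => simp [mbsList] at h
  | succ n ih =>
    have hl : (mbsList r n).length = n := mbsList_length r n
    have h' : i < n + 1 := by rwa [mbsList_length] at h
    rw [List.get_eq_getElem]
    simp only [mbsList]
    rcases Nat.lt_or_ge i n with hi | hi
    · rw [List.getElem_append_left (by rwa [hl])]
      exact ih (by rwa [hl])
    · have : i = n := by omega
      subst this
      rw [List.getElem_append_right (by rw [hl])]
      simp [hl, mbs]

variable (hbad : ∃ g, Bad r g)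
include hbad

theorem extBad_exists : ∀ n, ∃ x, ExtBad r (mbsList r n) x := by
  intro n
  induction n with
  | zero =>
    obtain ⟨g, hg⟩ := hbad
    exact ⟨g 0, g, hg, fun i h => by simp [mbsList_length] at h, by simp [mbsList_length]⟩
  | succ n ih =>
    have hspec : ExtBad r (mbsList r n) (mbs r n) := by
      rw [mbs, nextMin, dif_pos ih]
      exact (exists_minCard _ ih).choose_spec.1
    obtain ⟨g, hg, hag, hgn⟩ := hspec
    refine ⟨g ((mbsList r (n+1)).length), g, hg, ?_, rfl⟩
    intro i h
    have hi : i < n + 1 := by simpa [mbsList_length] using h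
    rw [mbsList_get]
    rcases Nat.lt_or_ge i n with hi' | hi'
    · rw [hag i (by simpa [mbsList_length] using hi'), mbsList_get]
    · have : i = n := by omega
      subst this
      rw [← hgn]
      congr 1
      simp [mbsList_length]

theorem mbs_spec (n : ℕ) : ExtBad r (mbsList r n) (mbs r n) ∧
    ∀ y, ExtBad r (mbsList r n) y → (mbs r n).nodes.card ≤ y.nodes.card := by
  have h := extBad_exists r hbad n
  rw [mbs, nextMin, dif_pos h]
  exact (exists_minCard _ h).choose_spec

theorem mbs_bad : Bad r (mbs r) := by
  intro m n hmn hemb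
  obtain ⟨g, hg, hag, hgn⟩ := (mbs_spec r hbad n).1
  have hm : g m = mbs r m := by
    rw [hag m (by simp [mbsList_length]; exact hmn), mbsList_get]
  rw [mbsList_length] at hgn
  exact hg m n hmn (by rw [hm, hgn]; exact hemb)

theorem mbs_min (n : ℕ) (g : ℕ → LTree Q) (hg : Bad r g)
    (hag : ∀ i, i < n → g i = mbs r i) : (mbs r n).nodes.card ≤ (g n).nodes.card := by
  refine (mbs_spec r hbad n).2 (g n) ⟨g, hg, ?_, by rw [mbsList_length]⟩
  intro i h
  rw [mbsList_get, hag i (by simpa [mbsList_length] using h)]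

theorem mbs_nonempty (n : ℕ) : ([] : List ℕ) ∈ (mbs r n).nodes := by
  by_contra hne
  have hempty : (mbs r n).nodes = ∅ := by
    rw [Finset.eq_empty_iff_forall_notMem]
    intro s hs
    exact hne ((mbs r n).closed s hs [] ⟨s, rfl⟩)
  exact mbs_bad r hbad n (n+1) (Nat.lt_succ_self n)
    (treeEmb_of_empty r hempty _)

end Kruskal
namespace Kruskal

variable {Q : Type*} (r : Q → Q → Prop)

/-- The set of all root subtrees of trees in the minimal bad sequence. -/
def subS (hbad : ∃ g, Bad r g) : Set (LTree Q) :=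
  {t : LTree Q | ∃ n c, [c] ∈ (mbs r n).nodes ∧ t = LTree.subtreeAt (mbs r n) c}

theorem subS_pwo (hrefl : ∀ x, r x x) (htrans : ∀ x y z, r x y → r y z → r x z)
    (hbad : ∃ g, Bad r g) :
    (subS r hbad).PartiallyWellOrderedOn (TreeEmb r) := by
  suffices H : ∀ h : ℕ → LTree Q, (∀ n, h n ∈ subS r hbad) →
      ∃ m n, m < n ∧ TreeEmb r (h m) (h n) by
    intro f; exact H (fun n => (f n).1) (fun n => (f n).2)
  intro h hmem
  by_contra hno
  push_neg at hno
  choose idx cdx hcdx hrep using hmem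
  -- minimize the index
  obtain ⟨N, ⟨k₀, rfl⟩, hmin⟩ := Nat.lt_wfRel.wf.has_min (Set.range idx) ⟨idx 0, 0, rfl⟩
  have hminle : ∀ j, idx k₀ ≤ idx j := fun j => not_lt.mp (hmin (idx j) ⟨j, rfl⟩)
  set N := idx k₀ with hN
  set g : ℕ → LTree Q := fun i => if i < N then mbs r i else h (k₀ + (i - N)) with hg
  have hgbad : Bad r g := by
    intro a b hab hemb
    simp only [hg] at hemb
    by_cases ha : a < N <;> by_cases hb : b < N
    · rw [if_pos ha, if_pos hb] at hemb
      exact mbs_bad r hbad a b hab hemb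
    · rw [if_pos ha, if_neg hb] at hemb
      set j := k₀ + (b - N) with hj
      have hemb2 : TreeEmb r (h j) (mbs r (idx j)) := by
        rw [hrep j]
        exact treeEmb_subtreeAt r hrefl _ _
      exact mbs_bad r hbad a (idx j) (lt_of_lt_of_le ha (hminle j))
        (treeEmb_trans r htrans hemb hemb2)
    · omega
    · rw [if_neg ha, if_neg hb] at hemb
      exact hno (k₀ + (a - N)) (k₀ + (b - N)) (by omega) hemb
  have hagree : ∀ i, i < N → g i = mbs r i := fun i hi => by simp [hg, hi]
  have hcard := mbs_min r hbad N g hgbad hagree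
  have hgN : g N = h k₀ := by simp [hg]
  rw [hgN, hrep k₀, ← hN] at hcard
  exact absurd hcard (not_le.mpr (subtreeAt_card_lt _ _ (hN ▸ hcdx k₀)))

/-- Kruskal's theorem. -/
theorem kruskal (hrefl : ∀ x, r x x) (htrans : ∀ x y z, r x y → r y z → r x z)
    (hwqo : IsWqo r) : IsWqo (TreeEmb r) := by
  by_contra hcon
  rw [IsWqo] at hcon
  push_neg at hcon
  obtain ⟨f, hf⟩ := hcon
  have hf' : ∀ m n, m < n → ¬ TreeEmb r (f m) (f n) := by
    intro m n hmn hemb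
    exact hf m n hmn hemb
  have hbad : ∃ g, Bad r g := ⟨f, hf'⟩
  haveI : IsRefl (LTree Q) (TreeEmb r) := ⟨treeEmb_refl r hrefl⟩
  haveI : IsTrans (LTree Q) (TreeEmb r) := ⟨fun _ _ _ h₁ h₂ => treeEmb_trans r htrans h₁ h₂⟩
  haveI : IsPreorder (LTree Q) (TreeEmb r) := {}
  have hS := subS_pwo r hrefl htrans hbad
  have hL := Set.PartiallyWellOrderedOn.partiallyWellOrderedOn_sublistForall₂ (TreeEmb r) hS
  have hmemL : ∀ n, childList (mbs r n) ∈ {l : List (LTree Q) | ∀ x ∈ l, x ∈ subS r hbad} := by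
    intro n x hx
    simp only [childList, List.mem_map] at hx
    obtain ⟨c, hc, rfl⟩ := hx
    rw [Finset.mem_toList, mem_childIdx] at hc
    exact ⟨n, c, hc, rfl⟩
  haveI : IsPreorder (List (LTree Q)) (List.SublistForall₂ (TreeEmb r)) := {}
  obtain ⟨φ, hφ⟩ := hL.exists_monotone_subseq (f := fun n => childList (mbs r n)) hmemL
  obtain ⟨m, n, hmn, hr⟩ := hwqo (fun k => (mbs r (φ k)).label ⟨[], mbs_nonempty r hbad (φ k)⟩)
  refine mbs_bad r hbad (φ m) (φ n) (φ.strictMono hmn) ?_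
  exact emb_of_sublistForall₂ r _ _ (mbs_nonempty r hbad (φ m)) (mbs_nonempty r hbad (φ n))
    hr (hφ m n (le_of_lt hmn))

end Kruskal

theorem stmt15 {Q : Type*} (r : Q → Q → Prop)
    (hrefl : ∀ x, r x x) (htrans : ∀ x y z, r x y → r y z → r x z)
    (hwqo : IsWqo r) :
    IsWqo (TreeEmb r) :=
  Kruskal.kruskal r hrefl htrans hwqo
end

section
/- If (Q, ≼) is a wqo partial order, then Q is a finite union of ideals, where an ideal is a downward closed subset that is upward directed. -/
def IsIdeal {Q : Type*} [PartialOrder Q] (I : Set Q) : Prop :=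
  (∀ x ∈ I, ∀ y, y ≤ x → y ∈ I) ∧ ∀ x ∈ I, ∀ y ∈ I, ∃ z ∈ I, x ≤ z ∧ y ≤ z

theorem stmt16 {Q : Type*} [PartialOrder Q]
    (hwqo : IsWqo (fun x y : Q => x ≤ y)) :
    ∃ S : Finset (Set Q), (∀ I ∈ S, IsIdeal I) ∧ ∀ x : Q, ∃ I ∈ S, x ∈ I := by
  classical
  -- The strict subset relation on lower sets is well-founded
  have hwf : WellFounded (fun A B : {D : Set Q // IsLowerSet D} => A.1 ⊂ B.1) := by
    haveI : IsStrictOrder {D : Set Q // IsLowerSet D}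
        (fun A B : {D : Set Q // IsLowerSet D} => A.1 ⊂ B.1) :=
      { irrefl := fun a => ssubset_irrefl _,
        trans := fun a b c h1 h2 => h1.trans h2 }
    by_contra hnwf
    rw [RelEmbedding.wellFounded_iff_isEmpty, not_isEmpty_iff] at hnwf
    obtain ⟨f⟩ := hnwf
    have hss : ∀ n : ℕ, (f (n + 1)).1 ⊂ (f n).1 := fun n =>
      f.map_rel_iff.2 (Nat.lt_succ_self n)
    have hmono : ∀ m n : ℕ, m ≤ n → (f n).1 ⊆ (f m).1 := by
      intro m n hmn
      induction n with
      | zero => simp_all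
      | succ k ih =>
        rcases Nat.lt_or_ge m (k + 1) with h | h
        · exact (hss k).subset.trans (ih (Nat.lt_succ_iff.1 h))
        · have : m = k + 1 := le_antisymm hmn h
          subst this; exact subset_rfl
    have hx : ∀ n : ℕ, ∃ x, x ∈ (f n).1 \ (f (n + 1)).1 := by
      intro n
      have := (hss n).2
      rw [Set.not_subset] at this
      obtain ⟨x, hx1, hx2⟩ := this
      exact ⟨x, hx1, hx2⟩
    choose g hg using hx
    obtain ⟨m, n, hmn, hle⟩ := hwqo g
    have h1 : g n ∈ (f n).1 := (hg n).1
    have h2 : g m ∈ (f (m + 1)).1 := (f (m + 1)).2 hle (hmono (m + 1) n hmn h1)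
    exact (hg m).2 h2
  -- Well-founded induction: every lower set is covered by finitely many ideals inside it
  have main : ∀ D : {D : Set Q // IsLowerSet D},
      ∃ S : Finset (Set Q), (∀ I ∈ S, IsIdeal I) ∧ ∀ x ∈ D.1, ∃ I ∈ S, x ∈ I := by
    intro D
    induction D using hwf.induction with
    | _ D ih =>
      by_cases hdir : ∀ x ∈ D.1, ∀ y ∈ D.1, ∃ z ∈ D.1, x ≤ z ∧ y ≤ z
      · exact ⟨{D.1}, by
          simp only [Finset.mem_singleton, forall_eq]
          exact ⟨fun x hx y hy => D.2 hy hx, hdir⟩,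
          fun x hx => ⟨D.1, Finset.mem_singleton_self _, hx⟩⟩
      · push_neg at hdir
        obtain ⟨x, hx, y, hy, hxy⟩ := hdir
        -- split D into D \ ↑x and D \ ↑y
        have mk : ∀ a : Q, a ∈ D.1 → IsLowerSet (D.1 \ {z | a ≤ z}) := by
          intro a _ u v hvu hu
          exact ⟨D.2 hvu hu.1, fun hav => hu.2 (hav.trans hvu)⟩
        have hssx : (D.1 \ {z | x ≤ z}) ⊂ D.1 :=
          ⟨Set.diff_subset, fun h => (h hx).2 le_rfl⟩
        have hssy : (D.1 \ {z | y ≤ z}) ⊂ D.1 :=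
          ⟨Set.diff_subset, fun h => (h hy).2 le_rfl⟩
        obtain ⟨S1, hS1, hS1c⟩ := ih ⟨_, mk x hx⟩ hssx
        obtain ⟨S2, hS2, hS2c⟩ := ih ⟨_, mk y hy⟩ hssy
        refine ⟨S1 ∪ S2, ?_, ?_⟩
        · intro I hI
          rcases Finset.mem_union.1 hI with h | h
          exacts [hS1 I h, hS2 I h]
        · intro z hz
          by_cases hxz : x ≤ z
          · by_cases hyz : y ≤ z
            · exact absurd hyz (hxy z hz hxz)
            · obtain ⟨I, hI, hzI⟩ := hS2c z ⟨hz, hyz⟩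
              exact ⟨I, Finset.mem_union_right _ hI, hzI⟩
          · obtain ⟨I, hI, hzI⟩ := hS1c z ⟨hz, hxz⟩
            exact ⟨I, Finset.mem_union_left _ hI, hzI⟩
  obtain ⟨S, hS, hScov⟩ := main ⟨Set.univ, isLowerSet_univ⟩
  exact ⟨S, hS, fun x => hScov x (Set.mem_univ x)⟩
end
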